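/- Fix n ≥ 2 and 2 ≤ k ≤ n, and let B_n^k be the connected building set on [n] consisting of all singletons and all subsets of cardinality at least k. Then the q-h-polynomial satisfies h_{B_n^k}(t,q) = Σ_{A} Σ_{π ∈ S_A} t^{des(π) + c(A,π)} q^{maj(π) + des(π) + c(A,π)}, where the outer sum is over all subsets A ⊆ [n] with |A| = n − k + 1, the inner sum is over all orderings π = π₁π₂⋯π_{n−k+1} of the elements of A, and c(A,π) = |{ j ∈ [n] \ A : j > π₁ }|. -/

import Mathlib

open scoped Classical

noncomputable section

/-- A rooted tree on the vertex set `S ⊆ ℕ`, encoded by its root and its parent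
function; edges are directed away from the root (so each non-root vertex `i`
carries the edge `(i, parent i)`, with `parent i` closer to the root).  The
parent function is normalized to be the identity outside `S` and at the root. -/
structure RTree (S : Finset ℕ) where
  root : ℕ
  root_mem : root ∈ S
  parent : ℕ → ℕ
  parent_out : ∀ i, i ∉ S → parent i = i
  parent_root : parent root = root
  parent_mem : ∀ i ∈ S, parent i ∈ S
  reach : ∀ i ∈ S, ∃ k, parent^[k] i = root

namespace RTree

variable {S : Finset ℕ}

/-- The set `T_{≤ i}` of descendants of `i` in `T` (including `i` itself). -/
def desc (T : RTree S) (i : ℕ) : Finset ℕ :=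
  S.filter fun j => ∃ k, T.parent^[k] j = i

/-- The depth of a vertex: its distance to the root. -/
def dp (T : RTree S) (x : ℕ) : ℕ :=
  sInf {k | T.parent^[k] x = T.root}

/-- The depth of the tree: the maximal depth of a vertex. -/
def depth (T : RTree S) : ℕ := S.sup T.dp

/-- The set of descent edges `(i, parent i)` with `i > parent i`, recorded by
the child endpoint `i`. -/
def desSet (T : RTree S) : Finset ℕ :=
  S.filter fun i => i ≠ T.root ∧ T.parent i < i

/-- The number of descents of `T`. -/
def des (T : RTree S) : ℕ := T.desSet.card

/-- The major index of `T`: the sum, over all descent edges `(i,j)` of `T`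
(with `j = parent i`), of `depth T - dp j`, i.e. of the minimal rank of `j`. -/
def maj (T : RTree S) : ℕ :=
  ∑ i ∈ T.desSet, (T.depth - T.dp (T.parent i))

/-- The statistic `μ(T)`: the sum, over all edges `(i,j)` of `T`
(with `j = parent i`), of `depth T - dp j`. -/
def mu (T : RTree S) : ℕ :=
  ∑ i ∈ S.filter (fun i => i ≠ T.root), (T.depth - T.dp (T.parent i))

end RTree

/-- `B` is a building set on the finite ground set `S`. -/
def IsBuildingSet (S : Finset ℕ) (B : Finset (Finset ℕ)) : Prop :=
  (∀ I ∈ B, I ⊆ S ∧ I.Nonempty) ∧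
  (∀ I ∈ B, ∀ J ∈ B, (I ∩ J).Nonempty → I ∪ J ∈ B) ∧
  (∀ i ∈ S, ({i} : Finset ℕ) ∈ B)

/-- `B` is a connected building set on `S`. -/
def IsConnBuildingSet (S : Finset ℕ) (B : Finset (Finset ℕ)) : Prop :=
  IsBuildingSet S B ∧ S ∈ B

/-- `T` is a `B`-tree: all descendant sets belong to `B`, and no union of
descendant sets of `k ≥ 2` pairwise incomparable nodes belongs to `B`. -/
def IsBTree (S : Finset ℕ) (B : Finset (Finset ℕ)) (T : RTree S) : Prop :=
  (∀ i ∈ S, T.desc i ∈ B) ∧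
  ∀ I : Finset ℕ, I ⊆ S → 2 ≤ I.card →
    (∀ i ∈ I, ∀ j ∈ I, i ≠ j → i ∉ T.desc j ∧ j ∉ T.desc i) →
    I.biUnion T.desc ∉ B

/-- The descent set of a word `l = l₀ l₁ ⋯`, recorded with `1`-based positions
shifted down by one: `i ∈ wordDesSet l` iff `l_i > l_{i+1}` (`0`-indexed). -/
def wordDesSet (l : List ℕ) : Finset ℕ :=
  (Finset.range (l.length - 1)).filter fun i => l.getD (i + 1) 0 < l.getD i 0

/-- The number of descents of a word. -/
def wordDes (l : List ℕ) : ℕ := (wordDesSet l).card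

/-- The major index of a word: the sum of the (`1`-based) descent positions. -/
def wordMaj (l : List ℕ) : ℕ := ∑ i ∈ wordDesSet l, (i + 1)


/-!
Every `B_S^k`-tree is a broom: a path `l₀ → l₁ → ⋯ → l_{m-1}` up to the root (the handle),
with all remaining vertices leaves hanging from `l₀`. Indeed, in a `B_S^k`-tree every vertex is
comparable with each vertex having at least `k` descendants; hence those vertices form a chain,
and every other vertex is a leaf whose parent is the deepest vertex of that chain. Conversely, a
broom is a `B_S^k`-tree exactly when it has `k - 1` leaves, and distinct handles give distinct
brooms, so the trees are indexed by the words `π` on `(|S| - k + 1)`-subsets `A`. The depth of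
the broom is `m`, hence a descent `lᵢ > lᵢ₊₁` of the handle contributes `i + 2` to `maj` and a
leaf `j > l₀` contributes `1`: this gives `des = des π + c(A,π)` and
`maj = maj π + des π + c(A,π)`.
-/

namespace RTree

variable {S : Finset ℕ} (T : RTree S)

theorem iterate_parent_mem {i : ℕ} (hi : i ∈ S) (t : ℕ) : T.parent^[t] i ∈ S := by
  induction t with
  | zero => exact hi
  | succ t ih => rw [Function.iterate_succ_apply']; exact T.parent_mem _ ih

theorem iterate_parent_root (t : ℕ) : T.parent^[t] T.root = T.root :=
  Function.iterate_fixed T.parent_root t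

theorem iterate_parent_dp {i : ℕ} (hi : i ∈ S) : T.parent^[T.dp i] i = T.root :=
  Nat.sInf_mem (T.reach i hi)

theorem dp_le_of_iterate {i t : ℕ} (h : T.parent^[t] i = T.root) : T.dp i ≤ t :=
  Nat.sInf_le h

theorem dp_eq_of_iterate {i t : ℕ} (h : T.parent^[t] i = T.root)
    (hmin : ∀ s < t, T.parent^[s] i ≠ T.root) : T.dp i = t :=
  (T.dp_le_of_iterate h).antisymm (not_lt.1 fun hlt =>
    hmin _ hlt (Nat.sInf_mem (s := {k | T.parent^[k] i = T.root}) ⟨t, h⟩))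

theorem dp_root : T.dp T.root = 0 :=
  Nat.le_zero.1 (T.dp_le_of_iterate (t := 0) rfl)

theorem dp_iterate_parent {i s : ℕ} (hi : i ∈ S) (hs : s ≤ T.dp i) :
    T.dp (T.parent^[s] i) = T.dp i - s := by
  apply T.dp_eq_of_iterate
  · rw [← Function.iterate_add_apply, Nat.sub_add_cancel hs, T.iterate_parent_dp hi]
  · intro r hr hroot
    rw [← Function.iterate_add_apply] at hroot
    have := T.dp_le_of_iterate hroot
    omega

theorem eq_root_of_parent_eq {i : ℕ} (hi : i ∈ S) (h : T.parent i = i) : i = T.root := by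
  obtain ⟨t, ht⟩ := T.reach i hi
  rwa [Function.iterate_fixed h] at ht

theorem ext_parent {T T' : RTree S} (h : T.parent = T'.parent) : T = T' := by
  have hroot : T.root = T'.root := by
    obtain ⟨t, ht⟩ := T'.reach T.root T.root_mem
    rw [← h, T.iterate_parent_root] at ht
    exact ht
  cases T; cases T'
  simp_all

theorem mem_desc {i j : ℕ} : j ∈ T.desc i ↔ j ∈ S ∧ ∃ t, T.parent^[t] j = i :=
  Finset.mem_filter

theorem desc_subset (i : ℕ) : T.desc i ⊆ S :=
  Finset.filter_subset _ _

theorem self_mem_desc {i : ℕ} (hi : i ∈ S) : i ∈ T.desc i :=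
  T.mem_desc.2 ⟨hi, 0, rfl⟩

theorem desc_root : T.desc T.root = S :=
  (T.desc_subset _).antisymm fun x hx => T.mem_desc.2 ⟨hx, T.reach x hx⟩

theorem parent_mem_desc {i j : ℕ} (hj : j ∈ T.desc i) (hji : j ≠ i) :
    T.parent j ∈ T.desc i := by
  obtain ⟨hjS, t, ht⟩ := T.mem_desc.1 hj
  cases t with
  | zero => exact absurd ht hji
  | succ t => exact T.mem_desc.2 ⟨T.parent_mem j hjS, t, ht⟩

theorem iterate_parent_of_mem_desc {i j : ℕ} (hi : i ∈ S) (h : j ∈ T.desc i) :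
    T.dp i ≤ T.dp j ∧ T.parent^[T.dp j - T.dp i] j = i := by
  obtain ⟨hjS, t, ht⟩ := T.mem_desc.1 h
  by_cases htj : t ≤ T.dp j
  · have := T.dp_iterate_parent hjS htj
    rw [ht] at this
    refine ⟨by omega, ?_⟩
    rwa [show T.dp j - T.dp i = t by omega]
  · have hroot : i = T.root := by
      rw [← ht, show t = (t - T.dp j) + T.dp j by omega, Function.iterate_add_apply,
        T.iterate_parent_dp hjS, T.iterate_parent_root]
    subst hroot
    rw [T.dp_root, Nat.sub_zero]
    exact ⟨Nat.zero_le _, T.iterate_parent_dp hjS⟩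

theorem eq_of_mem_desc_of_dp_le {i j : ℕ} (hi : i ∈ S) (h : j ∈ T.desc i)
    (hdp : T.dp j ≤ T.dp i) : j = i := by
  obtain ⟨hle, hit⟩ := T.iterate_parent_of_mem_desc hi h
  rwa [show T.dp j - T.dp i = 0 by omega] at hit

theorem eq_of_mem_desc_of_mem_desc {i j : ℕ} (hij : i ∈ T.desc j) (hji : j ∈ T.desc i) :
    i = j :=
  T.eq_of_mem_desc_of_dp_le (T.desc_subset _ hji) hij
    (T.iterate_parent_of_mem_desc (T.desc_subset _ hij) hji).1

end RTree

namespace List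

variable {α : Type*} {l : List α} {d : α} {i j : ℕ}

theorem getD_mem (hi : i < l.length) : l.getD i d ∈ l := by
  rw [getD_eq_getElem l d hi]
  exact getElem_mem hi

theorem getD_idxOf [BEq α] [LawfulBEq α] {x : α} (hx : x ∈ l) : l.getD (l.idxOf x) d = x := by
  rw [getD_eq_getElem l d (idxOf_lt_length_iff.2 hx), getElem_idxOf]

theorem Nodup.idxOf_getD [BEq α] [LawfulBEq α] (hl : l.Nodup) (hi : i < l.length) :
    l.idxOf (l.getD i d) = i := by
  rw [getD_eq_getElem l d hi, hl.idxOf_getElem]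

theorem Nodup.getD_inj_iff (hl : l.Nodup) (hi : i < l.length) (hj : j < l.length) :
    l.getD i d = l.getD j d ↔ i = j := by
  rw [getD_eq_getElem l d hi, getD_eq_getElem l d hj, hl.getElem_inj_iff]

theorem Nodup.mem_take_succ_iff [BEq α] [LawfulBEq α] (hl : l.Nodup) {x : α} (hx : x ∈ l) :
    x ∈ l.take (i + 1) ↔ l.idxOf x ≤ i := by
  have hidx := idxOf_lt_length_iff.2 hx
  rw [mem_take_iff_getElem]
  constructor
  · rintro ⟨j, hj, rfl⟩
    rw [hl.idxOf_getElem]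
    omega
  · exact fun h => ⟨l.idxOf x, by omega, getElem_idxOf hidx⟩

end List

/-- The broom on `S` with handle `l = l₀ l₁ ⋯ l_{m-1}` is the path `l₀ → l₁ → ⋯ → l_{m-1}` up to
the root `l_{m-1}`, with every vertex of `S` off the handle a leaf hanging from `l₀`. -/
def broomParent (S : Finset ℕ) (l : List ℕ) (j : ℕ) : ℕ :=
  if j ∈ S then (if j ∈ l then l.getD (l.idxOf j + 1) j else l.headD 0) else j

section Broom

variable (S : Finset ℕ) {l : List ℕ}

theorem broomParent_of_notMem {j : ℕ} (hj : j ∉ S) : broomParent S l j = j := by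
  rw [broomParent, if_neg hj]

theorem broomParent_of_notMem_handle {j : ℕ} (hj : j ∈ S) (hjl : j ∉ l) :
    broomParent S l j = l.getD 0 0 := by
  rw [broomParent, if_pos hj, if_neg hjl, List.headD_eq_getD]

variable (hne : l ≠ []) (hnd : l.Nodup) (hsub : ∀ x ∈ l, x ∈ S)

include hnd hsub

theorem broomParent_getD {i : ℕ} (hi : i < l.length) :
    broomParent S l (l.getD i 0) = l.getD (i + 1) (l.getD i 0) := by
  have hmem : l.getD i 0 ∈ l := List.getD_mem hi
  rw [broomParent, if_pos (hsub _ hmem), if_pos hmem, hnd.idxOf_getD hi]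

theorem broomParent_getD_of_succ_lt {i : ℕ} (hi : i + 1 < l.length) :
    broomParent S l (l.getD i 0) = l.getD (i + 1) 0 := by
  rw [broomParent_getD S hnd hsub (by omega), List.getD_eq_getElem l _ hi,
    List.getD_eq_getElem l 0 hi]

theorem iterate_broomParent_getD {i : ℕ} (hi : i < l.length) (t : ℕ) :
    (broomParent S l)^[t] (l.getD i 0) = l.getD (min (i + t) (l.length - 1)) 0 := by
  induction t with
  | zero => rw [Function.iterate_zero_apply, Nat.add_zero, min_eq_left (by omega)]
  | succ t ih =>
    rw [Function.iterate_succ_apply', ih, broomParent_getD S hnd hsub (by omega)]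
    by_cases ht : i + t + 1 < l.length
    · rw [min_eq_left (by omega : i + t ≤ l.length - 1),
        min_eq_left (by omega : i + (t + 1) ≤ l.length - 1), ← Nat.add_assoc,
        List.getD_eq_getElem l _ ht, List.getD_eq_getElem l 0 ht]
    · rw [min_eq_right (by omega : l.length - 1 ≤ i + t),
        min_eq_right (by omega : l.length - 1 ≤ i + (t + 1)),
        List.getD_eq_default l _ (by omega)]

include hne in
theorem iterate_succ_broomParent_of_notMem_handle {j : ℕ} (hj : j ∈ S) (hjl : j ∉ l)
    (t : ℕ) : (broomParent S l)^[t + 1] j = l.getD (min t (l.length - 1)) 0 := by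
  rw [Function.iterate_succ_apply, broomParent_of_notMem_handle S hj hjl,
    iterate_broomParent_getD S hnd hsub (List.length_pos_iff.2 hne), Nat.zero_add]

def broom : RTree S where
  root := l.getD (l.length - 1) 0
  root_mem := hsub _ (List.getD_mem (by simp [List.length_pos_iff.2 hne]))
  parent := broomParent S l
  parent_out _ hi := broomParent_of_notMem S hi
  parent_root := by
    rw [broomParent_getD S hnd hsub (by simp [List.length_pos_iff.2 hne])]
    exact List.getD_eq_default _ _ (by omega)
  parent_mem i hi := by
    by_cases hil : i ∈ l
    · rw [← List.getD_idxOf (d := 0) hil,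
        broomParent_getD S hnd hsub (List.idxOf_lt_length_iff.2 hil)]
      by_cases hc : l.idxOf i + 1 < l.length
      · exact hsub _ (List.getD_mem hc)
      · rw [List.getD_eq_default _ _ (by omega), List.getD_idxOf hil]
        exact hi
    · rw [broomParent_of_notMem_handle S hi hil]
      exact hsub _ (List.getD_mem (List.length_pos_iff.2 hne))
  reach i hi := by
    by_cases hil : i ∈ l
    · refine ⟨l.length - 1 - l.idxOf i, ?_⟩
      have key := iterate_broomParent_getD S hnd hsub (List.idxOf_lt_length_iff.2 hil)
        (l.length - 1 - l.idxOf i)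
      rw [List.getD_idxOf hil] at key
      rw [key]
      congr 1
      omega
    · refine ⟨l.length - 1 + 1, ?_⟩
      rw [iterate_succ_broomParent_of_notMem_handle S hne hnd hsub hi hil, min_self]

end Broom

section BroomStatistics

variable (S : Finset ℕ) {l : List ℕ} (hne : l ≠ []) (hnd : l.Nodup) (hsub : ∀ x ∈ l, x ∈ S)

theorem broom_root : (broom S hne hnd hsub).root = l.getD (l.length - 1) 0 := rfl

theorem broom_parent : (broom S hne hnd hsub).parent = broomParent S l := rfl

include hne hnd hsub

theorem dp_broom_getD {i : ℕ} (hi : i < l.length) :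
    (broom S hne hnd hsub).dp (l.getD i 0) = l.length - 1 - i := by
  apply RTree.dp_eq_of_iterate
  · rw [broom_parent, broom_root, iterate_broomParent_getD S hnd hsub hi]
    congr 1
    omega
  · intro s hs h
    rw [broom_parent, broom_root, iterate_broomParent_getD S hnd hsub hi,
      hnd.getD_inj_iff (by omega) (by omega)] at h
    omega

theorem dp_broom_of_notMem_handle {j : ℕ} (hj : j ∈ S) (hjl : j ∉ l) :
    (broom S hne hnd hsub).dp j = l.length := by
  have hlen := List.length_pos_iff.2 hne
  apply RTree.dp_eq_of_iterate
  · have h := iterate_succ_broomParent_of_notMem_handle S hne hnd hsub hj hjl (l.length - 1)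
    rwa [Nat.sub_add_cancel hlen, min_self] at h
  · intro s hs h
    rw [broom_parent, broom_root] at h
    cases s with
    | zero =>
      rw [Function.iterate_zero_apply] at h
      exact hjl (h ▸ List.getD_mem (by omega))
    | succ s =>
      rw [iterate_succ_broomParent_of_notMem_handle S hne hnd hsub hj hjl,
        hnd.getD_inj_iff (by omega) (by omega)] at h
      omega

theorem depth_broom (hlt : l.length < S.card) : (broom S hne hnd hsub).depth = l.length := by
  obtain ⟨x, hxS, hxl⟩ : ∃ x ∈ S, x ∉ l := by
    by_contra! h
    have := Finset.card_le_card (show S ⊆ l.toFinset from fun x hx => List.mem_toFinset.2 (h x hx))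
    rw [List.toFinset_card_of_nodup hnd] at this
    omega
  refine (Finset.sup_le fun x hx => ?_).antisymm ?_
  · by_cases hxl : x ∈ l
    · rw [← List.getD_idxOf (d := 0) hxl,
        dp_broom_getD S hne hnd hsub (List.idxOf_lt_length_iff.2 hxl)]
      omega
    · rw [dp_broom_of_notMem_handle S hne hnd hsub hx hxl]
  · rw [← dp_broom_of_notMem_handle S hne hnd hsub hxS hxl]
    exact Finset.le_sup hxS

theorem desSet_broom :
    (broom S hne hnd hsub).desSet =
      (wordDesSet l).image (l.getD · 0) ∪ (S \ l.toFinset).filter (l.headD 0 < ·) := by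
  have hlen := List.length_pos_iff.2 hne
  ext x
  rw [RTree.desSet, Finset.mem_filter]
  simp only [wordDesSet, Finset.mem_filter, Finset.mem_union, Finset.mem_image,
    Finset.mem_sdiff, Finset.mem_range, List.mem_toFinset, broom_root, broom_parent]
  constructor
  · rintro ⟨hxS, hxr, hdes⟩
    by_cases hxl : x ∈ l
    · left
      have hidx := List.idxOf_lt_length_iff.2 hxl
      have hlast : l.idxOf x ≠ l.length - 1 := fun h => hxr (by rw [← h, List.getD_idxOf hxl])
      rw [← List.getD_idxOf (d := 0) hxl,
        broomParent_getD_of_succ_lt S hnd hsub (by omega)] at hdes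
      exact ⟨l.idxOf x, ⟨by omega, hdes⟩, List.getD_idxOf hxl⟩
    · right
      rw [broomParent_of_notMem_handle S hxS hxl, ← List.headD_eq_getD] at hdes
      exact ⟨⟨hxS, hxl⟩, hdes⟩
  · rintro (⟨t, ⟨ht, hdes⟩, rfl⟩ | ⟨⟨hxS, hxl⟩, hlt⟩)
    · refine ⟨hsub _ (List.getD_mem (by omega)), fun h => ?_, ?_⟩
      · rw [hnd.getD_inj_iff (by omega) (by omega)] at h
        omega
      · rwa [broomParent_getD_of_succ_lt S hnd hsub (by omega)]
    · refine ⟨hxS, fun h => hxl (h ▸ List.getD_mem (by omega)), ?_⟩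
      rwa [broomParent_of_notMem_handle S hxS hxl, ← List.headD_eq_getD]

omit hne hsub in
theorem injOn_getD_wordDesSet : Set.InjOn (l.getD · 0) (wordDesSet l) := by
  intro a ha b hb hab
  simp only [Finset.coe_filter, Finset.mem_range, wordDesSet, Set.mem_ofPred_eq] at ha hb
  exact (hnd.getD_inj_iff (by omega) (by omega)).1 hab

omit hne hnd hsub in
theorem disjoint_image_wordDesSet_leaves :
    Disjoint ((wordDesSet l).image (l.getD · 0)) ((S \ l.toFinset).filter (l.headD 0 < ·)) := by
  simp only [Finset.disjoint_left, Finset.mem_image, wordDesSet, Finset.mem_filter,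
    Finset.mem_range, Finset.mem_sdiff, List.mem_toFinset]
  rintro _ ⟨t, ⟨ht, -⟩, rfl⟩ ⟨⟨-, hl⟩, -⟩
  exact hl (List.getD_mem (by omega))

theorem des_broom :
    (broom S hne hnd hsub).des =
      wordDes l + ((S \ l.toFinset).filter (l.headD 0 < ·)).card := by
  rw [RTree.des, desSet_broom, Finset.card_union_of_disjoint
    (disjoint_image_wordDesSet_leaves S), Finset.card_image_of_injOn
    (injOn_getD_wordDesSet hnd), wordDes]

theorem maj_broom (hlt : l.length < S.card) :
    (broom S hne hnd hsub).maj =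
      wordMaj l + wordDes l + ((S \ l.toFinset).filter (l.headD 0 < ·)).card := by
  have hlen := List.length_pos_iff.2 hne
  rw [RTree.maj, desSet_broom, Finset.sum_union (disjoint_image_wordDesSet_leaves S),
    Finset.sum_image (injOn_getD_wordDesSet hnd), wordMaj, wordDes, Finset.card_eq_sum_ones,
    Finset.card_eq_sum_ones, ← Finset.sum_add_distrib, depth_broom S hne hnd hsub hlt]
  congr 1
  · refine Finset.sum_congr rfl fun t ht => ?_
    simp only [wordDesSet, Finset.mem_filter, Finset.mem_range] at ht
    rw [broom_parent, broomParent_getD_of_succ_lt S hnd hsub (by omega),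
      dp_broom_getD S hne hnd hsub (by omega)]
    omega
  · refine Finset.sum_congr rfl fun x hx => ?_
    simp only [Finset.mem_filter, Finset.mem_sdiff, List.mem_toFinset] at hx
    rw [broom_parent, broomParent_of_notMem_handle S hx.1.1 hx.1.2,
      dp_broom_getD S hne hnd hsub hlen]
    omega

theorem desc_broom_getD {i : ℕ} (hi : i < l.length) :
    (broom S hne hnd hsub).desc (l.getD i 0) = (l.take (i + 1)).toFinset ∪ (S \ l.toFinset) := by
  ext x
  rw [RTree.mem_desc, Finset.mem_union, List.mem_toFinset, Finset.mem_sdiff, List.mem_toFinset,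
    broom_parent]
  constructor
  · rintro ⟨hxS, t, ht⟩
    by_cases hxl : x ∈ l
    · have hidx := List.idxOf_lt_length_iff.2 hxl
      rw [← List.getD_idxOf (d := 0) hxl, iterate_broomParent_getD S hnd hsub hidx,
        hnd.getD_inj_iff (by omega) hi] at ht
      exact Or.inl ((hnd.mem_take_succ_iff hxl).2 (by omega))
    · exact Or.inr ⟨hxS, hxl⟩
  · rintro (hx | ⟨hxS, hxl⟩)
    · have hxl : x ∈ l := List.mem_of_mem_take hx
      have hle := (hnd.mem_take_succ_iff hxl).1 hx
      have key := iterate_broomParent_getD S hnd hsub (List.idxOf_lt_length_iff.2 hxl)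
        (i - l.idxOf x)
      rw [List.getD_idxOf hxl] at key
      refine ⟨hsub _ hxl, i - l.idxOf x, key.trans ?_⟩
      congr 1
      omega
    · refine ⟨hxS, i + 1, ?_⟩
      rw [iterate_succ_broomParent_of_notMem_handle S hne hnd hsub hxS hxl]
      congr 1
      omega

theorem desc_broom_of_notMem_handle {j : ℕ} (hj : j ∈ S) (hjl : j ∉ l) :
    (broom S hne hnd hsub).desc j = {j} := by
  refine Finset.eq_singleton_iff_unique_mem.2 ⟨RTree.self_mem_desc _ hj, fun x hx => ?_⟩
  obtain ⟨hxS, t, ht⟩ := (RTree.mem_desc _).1 hx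
  rw [broom_parent] at ht
  have hlen := List.length_pos_iff.2 hne
  by_cases hxl : x ∈ l
  · rw [← List.getD_idxOf (d := 0) hxl,
      iterate_broomParent_getD S hnd hsub (List.idxOf_lt_length_iff.2 hxl)] at ht
    exact absurd (ht ▸ List.getD_mem (by omega)) hjl
  · cases t with
    | zero => exact ht
    | succ t =>
      rw [iterate_succ_broomParent_of_notMem_handle S hne hnd hsub hxS hxl] at ht
      exact absurd (ht ▸ List.getD_mem (by omega)) hjl

omit hne in
theorem card_leaves_broom : (S \ l.toFinset).card = S.card - l.length := by
  rw [Finset.card_sdiff_of_subset (fun x hx => hsub x (List.mem_toFinset.1 hx)),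
    List.toFinset_card_of_nodup hnd]

theorem card_desc_broom_getD {i : ℕ} (hi : i < l.length) :
    ((broom S hne hnd hsub).desc (l.getD i 0)).card = i + 1 + (S.card - l.length) := by
  have hdisj : Disjoint (l.take (i + 1)).toFinset (S \ l.toFinset) :=
    Finset.disjoint_left.2 fun x hx hx' => (Finset.mem_sdiff.1 hx').2
      (List.mem_toFinset.2 (List.mem_of_mem_take (List.mem_toFinset.1 hx)))
  rw [desc_broom_getD S hne hnd hsub hi, Finset.card_union_of_disjoint hdisj,
    card_leaves_broom S hnd hsub, List.toFinset_card_of_nodup ((List.take_sublist _ _).nodup hnd),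
    List.length_take, min_eq_left (by omega)]

theorem mem_desc_or_mem_desc_broom {x y : ℕ} (hx : x ∈ l) (hy : y ∈ S) :
    y ∈ (broom S hne hnd hsub).desc x ∨ x ∈ (broom S hne hnd hsub).desc y := by
  have hidx := List.idxOf_lt_length_iff.2 hx
  by_cases hyl : y ∈ l
  · have hidy := List.idxOf_lt_length_iff.2 hyl
    rw [← List.getD_idxOf (d := 0) hx, ← List.getD_idxOf (d := 0) hyl,
      desc_broom_getD S hne hnd hsub hidx, desc_broom_getD S hne hnd hsub hidy]
    simp only [Finset.mem_union, List.mem_toFinset, hnd.mem_take_succ_iff (List.getD_mem hidx),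
      hnd.mem_take_succ_iff (List.getD_mem hidy), hnd.idxOf_getD hidx, hnd.idxOf_getD hidy]
    omega
  · left
    rw [← List.getD_idxOf (d := 0) hx, desc_broom_getD S hne hnd hsub hidx]
    exact Finset.mem_union_right _ (Finset.mem_sdiff.2 ⟨hy, List.mem_toFinset.not.2 hyl⟩)

end BroomStatistics

def bnk (S : Finset ℕ) (k : ℕ) : Finset (Finset ℕ) :=
  S.image (fun i => ({i} : Finset ℕ)) ∪ S.powerset.filter fun I => k ≤ I.card

section Bnk

variable {S : Finset ℕ} {k : ℕ}

theorem mem_bnk {I : Finset ℕ} : I ∈ bnk S k ↔ (∃ i ∈ S, {i} = I) ∨ (I ⊆ S ∧ k ≤ I.card) := by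
  simp [bnk]

theorem singleton_mem_bnk {i : ℕ} (hi : i ∈ S) : {i} ∈ bnk S k :=
  mem_bnk.2 (Or.inl ⟨i, hi, rfl⟩)

theorem mem_bnk_of_le_card {I : Finset ℕ} (hI : I ⊆ S) (hk : k ≤ I.card) : I ∈ bnk S k :=
  mem_bnk.2 (Or.inr ⟨hI, hk⟩)

theorem le_card_of_mem_bnk {I : Finset ℕ} (hI : I ∈ bnk S k) (h2 : 2 ≤ I.card) : k ≤ I.card := by
  rcases mem_bnk.1 hI with ⟨i, -, rfl⟩ | ⟨-, hk⟩
  · simp at h2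
  · exact hk

theorem isBTree_broom_iff {l : List ℕ} (hne : l ≠ []) (hnd : l.Nodup) (hsub : ∀ x ∈ l, x ∈ S)
    (hk : 2 ≤ k) (hkS : k ≤ S.card) (hlt : l.length < S.card) :
    IsBTree S (bnk S k) (broom S hne hnd hsub) ↔ l.length = S.card - k + 1 := by
  have hlen := List.length_pos_iff.2 hne
  have hleaves := card_leaves_broom S hnd hsub
  have hleaf : ∀ j ∈ S \ l.toFinset, (broom S hne hnd hsub).desc j = {j} := fun j hj =>
    desc_broom_of_notMem_handle S hne hnd hsub (Finset.mem_sdiff.1 hj).1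
      (List.mem_toFinset.not.1 (Finset.mem_sdiff.1 hj).2)
  have hbiUnion : ∀ I ⊆ S \ l.toFinset, I.biUnion (broom S hne hnd hsub).desc = I := fun I hI => by
    rw [Finset.biUnion_congr rfl fun x hx => hleaf x (hI hx), Finset.biUnion_singleton_eq_self]
  constructor
  · intro hT
    have hhead := card_desc_broom_getD S hne hnd hsub hlen
    have hk_le := le_card_of_mem_bnk (hT.1 _ (hsub _ (List.getD_mem (d := 0) hlen))) (by omega)
    have hle : S.card - l.length ≤ k - 1 := by
      by_contra! hgt
      have hnotMem := hT.2 (S \ l.toFinset) Finset.sdiff_subset (by omega) fun a ha b hb hab => by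
        rw [hleaf a ha, hleaf b hb]
        simp [hab, Ne.symm hab]
      rw [hbiUnion _ subset_rfl] at hnotMem
      exact hnotMem (mem_bnk_of_le_card Finset.sdiff_subset (by omega))
    omega
  · intro hl
    refine ⟨fun i hi => ?_, fun I hIS hI2 hinc hmem => ?_⟩
    · by_cases hil : i ∈ l
      · have hcard := card_desc_broom_getD S hne hnd hsub (List.idxOf_lt_length_iff.2 hil)
        rw [List.getD_idxOf hil] at hcard
        exact mem_bnk_of_le_card (RTree.desc_subset _ _) (by omega)
      · rw [desc_broom_of_notMem_handle S hne hnd hsub hi hil]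
        exact singleton_mem_bnk hi
    · have hIleaves : I ⊆ S \ l.toFinset := fun x hx => by
        refine Finset.mem_sdiff.2 ⟨hIS hx, fun hxl => ?_⟩
        obtain ⟨y, hy, hyx⟩ := Finset.exists_mem_ne (by omega : 1 < I.card) x
        rcases mem_desc_or_mem_desc_broom S hne hnd hsub (List.mem_toFinset.1 hxl) (hIS hy)
          with h | h
        exacts [(hinc y hy x hx hyx).1 h, (hinc y hy x hx hyx).2 h]
      rw [hbiUnion I hIleaves] at hmem
      have := Finset.card_le_card hIleaves
      have := le_card_of_mem_bnk hmem hI2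
      omega

end Bnk

namespace RTree

variable {S : Finset ℕ} (T : RTree S)

def pathToRoot (b : ℕ) : List ℕ :=
  (List.range (T.dp b + 1)).map fun u => T.parent^[u] b

theorem length_pathToRoot (b : ℕ) : (T.pathToRoot b).length = T.dp b + 1 := by
  simp [pathToRoot]

theorem pathToRoot_ne_nil (b : ℕ) : T.pathToRoot b ≠ [] := by
  simp [pathToRoot]

theorem getD_pathToRoot {b u d : ℕ} (hu : u ≤ T.dp b) :
    (T.pathToRoot b).getD u d = T.parent^[u] b := by
  rw [pathToRoot, List.getD_eq_getElem _ _ (by simp; omega), List.getElem_map,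
    List.getElem_range]

theorem mem_pathToRoot {b x : ℕ} (hb : b ∈ S) : x ∈ T.pathToRoot b ↔ b ∈ T.desc x := by
  simp only [pathToRoot, List.mem_map, List.mem_range]
  constructor
  · rintro ⟨u, -, rfl⟩
    exact T.mem_desc.2 ⟨hb, u, rfl⟩
  · intro h
    obtain ⟨-, t, ht⟩ := T.mem_desc.1 h
    have hx : x ∈ S := ht ▸ T.iterate_parent_mem hb t
    exact ⟨_, by omega, (T.iterate_parent_of_mem_desc hx h).2⟩

theorem mem_of_mem_pathToRoot {b x : ℕ} (hb : b ∈ S) (hx : x ∈ T.pathToRoot b) : x ∈ S := by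
  obtain ⟨u, -, rfl⟩ := List.mem_map.1 hx
  exact T.iterate_parent_mem hb u

theorem nodup_pathToRoot {b : ℕ} (hb : b ∈ S) : (T.pathToRoot b).Nodup := by
  refine List.Nodup.map_on (fun u hu v hv huv => ?_) List.nodup_range
  rw [List.mem_range] at hu hv
  have hdu := T.dp_iterate_parent hb (Nat.le_of_lt_succ hu)
  have hdv := T.dp_iterate_parent hb (Nat.le_of_lt_succ hv)
  rw [huv] at hdu
  omega

theorem parent_eq_broomParent {b : ℕ} (hb : b ∈ S)
    (hleaf : ∀ j ∈ S, j ∉ T.pathToRoot b → T.parent j = b) :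
    T.parent = broomParent S (T.pathToRoot b) := by
  have hnd := T.nodup_pathToRoot hb
  have hsub := fun x => T.mem_of_mem_pathToRoot (x := x) hb
  funext j
  by_cases hjS : j ∈ S
  · by_cases hjp : j ∈ T.pathToRoot b
    · obtain ⟨u, hu, rfl⟩ := List.mem_map.1 hjp
      have hu := Nat.le_of_lt_succ (List.mem_range.1 hu)
      rw [← T.getD_pathToRoot (d := 0) hu,
        broomParent_getD S hnd hsub (by rw [T.length_pathToRoot]; omega), T.getD_pathToRoot hu]
      rcases hu.lt_or_eq with hlt | rfl
      · rw [T.getD_pathToRoot hlt, Function.iterate_succ_apply']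
      · rw [List.getD_eq_default _ _ (by rw [T.length_pathToRoot]), T.iterate_parent_dp hb,
          T.parent_root]
    · rw [hleaf j hjS hjp, broomParent_of_notMem_handle S hjS hjp,
        T.getD_pathToRoot (Nat.zero_le _), Function.iterate_zero_apply]
  · rw [T.parent_out j hjS, broomParent_of_notMem S hjS]

end RTree

theorem IsBTree.union_desc_notMem {S : Finset ℕ} {B : Finset (Finset ℕ)} {T : RTree S}
    (hT : IsBTree S B T) {i j : ℕ} (hi : i ∈ S) (hj : j ∈ S) (hij : i ∉ T.desc j)
    (hji : j ∉ T.desc i) : T.desc i ∪ T.desc j ∉ B := by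
  have hne : i ≠ j := fun h => hij (h ▸ T.self_mem_desc hi)
  have h := hT.2 {i, j} (Finset.insert_subset hi (Finset.singleton_subset_iff.2 hj))
    (Finset.card_pair hne).ge fun a ha b hb hab => by
      simp only [Finset.mem_insert, Finset.mem_singleton] at ha hb
      rcases ha with rfl | rfl <;> rcases hb with rfl | rfl
      exacts [absurd rfl hab, ⟨hij, hji⟩, ⟨hji, hij⟩, absurd rfl hab]
  rwa [Finset.biUnion_insert, Finset.singleton_biUnion] at h

section BnkTrees

variable {S : Finset ℕ} {k : ℕ} {T : RTree S}

theorem desc_eq_singleton_or_le_card (hT : IsBTree S (bnk S k) T) {i : ℕ} (hi : i ∈ S) :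
    T.desc i = {i} ∨ k ≤ (T.desc i).card := by
  rcases mem_bnk.1 (hT.1 i hi) with ⟨j, -, hj⟩ | ⟨-, hk⟩
  · have hij := T.self_mem_desc hi
    rw [← hj, Finset.mem_singleton] at hij
    exact Or.inl (by rw [← hj, hij])
  · exact Or.inr hk

theorem mem_desc_or_mem_desc_of_le_card (hT : IsBTree S (bnk S k) T) {i j : ℕ} (hi : i ∈ S)
    (hj : j ∈ S) (hbig : k ≤ (T.desc i).card) : i ∈ T.desc j ∨ j ∈ T.desc i := by
  by_contra! h
  exact hT.union_desc_notMem hi hj h.1 h.2 (mem_bnk_of_le_card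
    (Finset.union_subset (T.desc_subset i) (T.desc_subset j))
    (hbig.trans (Finset.card_le_card Finset.subset_union_left)))

theorem parent_eq_of_forall_le_card (hT : IsBTree S (bnk S k) T) {b : ℕ} (hb : b ∈ S)
    (hbig : k ≤ (T.desc b).card) (hbelow : ∀ i ∈ S, k ≤ (T.desc i).card → b ∈ T.desc i)
    {j : ℕ} (hj : j ∈ S) (hbj : b ∉ T.desc j) : T.parent j = b := by
  have hjb : j ≠ b := fun h => hbj (by rw [h]; exact T.self_mem_desc hb)
  have hjdesc : j ∈ T.desc b :=
    (mem_desc_or_mem_desc_of_le_card hT hb hj hbig).resolve_left hbj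
  have hpj : T.parent j ≠ j := fun h => hbj <| by
    rw [T.eq_root_of_parent_eq hj h, T.desc_root]
    exact hb
  have hbigp : k ≤ (T.desc (T.parent j)).card := by
    refine (desc_eq_singleton_or_le_card hT (T.parent_mem j hj)).resolve_left fun h => hpj ?_
    have : j ∈ T.desc (T.parent j) := T.mem_desc.2 ⟨hj, 1, rfl⟩
    rw [h, Finset.mem_singleton] at this
    exact this.symm
  exact T.eq_of_mem_desc_of_mem_desc (T.parent_mem_desc hjdesc hjb)
    (hbelow _ (T.parent_mem j hj) hbigp)

/-- The handle runs from the deepest vertex with at least `k` descendants to the root. -/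
theorem exists_broom_eq_of_isBTree (hk : 2 ≤ k) (hkS : k ≤ S.card)
    (hT : IsBTree S (bnk S k) T) :
    ∃ (l : List ℕ) (hne : l ≠ []) (hnd : l.Nodup) (hsub : ∀ x ∈ l, x ∈ S),
      l.length < S.card ∧ broom S hne hnd hsub = T := by
  obtain ⟨b, hbF, hbmax⟩ := Finset.exists_max_image (S.filter fun i => k ≤ (T.desc i).card) T.dp
    ⟨T.root, Finset.mem_filter.2 ⟨T.root_mem, by rwa [T.desc_root]⟩⟩
  obtain ⟨hb, hbig⟩ := Finset.mem_filter.1 hbF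
  have hbelow : ∀ i ∈ S, k ≤ (T.desc i).card → b ∈ T.desc i := fun i hi hi' => by
    rcases mem_desc_or_mem_desc_of_le_card hT hi hb hi' with h | h
    · rw [T.eq_of_mem_desc_of_dp_le hb h (hbmax i (Finset.mem_filter.2 ⟨hi, hi'⟩))]
      exact T.self_mem_desc hb
    · exact h
  obtain ⟨x, hx, hxb⟩ := Finset.exists_mem_ne (by omega : 1 < (T.desc b).card) b
  have hxS : x ∉ (T.pathToRoot b).toFinset := fun h => hxb <|
    T.eq_of_mem_desc_of_mem_desc hx ((T.mem_pathToRoot hb).1 (List.mem_toFinset.1 h))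
  have hsub := fun x => T.mem_of_mem_pathToRoot (x := x) hb
  refine ⟨T.pathToRoot b, T.pathToRoot_ne_nil b, T.nodup_pathToRoot hb, hsub, ?_,
    RTree.ext_parent (T.parent_eq_broomParent hb fun j hj hjp => ?_).symm⟩
  · rw [← List.toFinset_card_of_nodup (T.nodup_pathToRoot hb)]
    exact Finset.card_lt_card ⟨fun y hy => hsub y (List.mem_toFinset.1 hy),
      fun h => hxS (h (T.desc_subset b hx))⟩
  · exact parent_eq_of_forall_le_card hT hb hbig hbelow hj
      (fun h => hjp ((T.mem_pathToRoot hb).2 h))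

end BnkTrees

theorem eq_of_broom_eq {S : Finset ℕ} {l l' : List ℕ} (hne : l ≠ []) (hnd : l.Nodup)
    (hsub : ∀ x ∈ l, x ∈ S) (hne' : l' ≠ []) (hnd' : l'.Nodup) (hsub' : ∀ x ∈ l', x ∈ S)
    (hlen : l.length = l'.length) (h : broom S hne hnd hsub = broom S hne' hnd' hsub') :
    l = l' := by
  refine List.ext_getElem hlen fun t ht ht' => ?_
  have hdp := dp_broom_getD S hne' hnd' hsub' ht'
  rw [← h, List.getD_eq_getElem _ _ ht'] at hdp
  by_cases hl : l'[t] ∈ l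
  · have hidx := List.idxOf_lt_length_iff.2 hl
    have hdpl := dp_broom_getD S hne hnd hsub hidx
    rw [List.getD_idxOf hl] at hdpl
    rw [← List.getD_eq_getElem _ 0 ht, ← List.getD_idxOf (d := 0) hl,
      show l.idxOf l'[t] = t by omega]
  · rw [dp_broom_of_notMem_handle S hne hnd hsub (hsub' _ (List.getElem_mem ht')) hl] at hdp
    omega

theorem mem_permutations_sort_iff {A : Finset ℕ} {l : List ℕ} :
    l ∈ (A.sort (· ≤ ·)).permutations.toFinset ↔ l.Nodup ∧ l.toFinset = A := by
  rw [List.mem_toFinset, List.mem_permutations]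
  constructor
  · intro h
    exact ⟨h.nodup_iff.2 (Finset.sort_nodup _ _),
      by rw [List.toFinset_eq_of_perm _ _ h, Finset.sort_toFinset]⟩
  · rintro ⟨hnd, rfl⟩
    exact List.perm_of_nodup_nodup_toFinset_eq hnd (Finset.sort_nodup _ _)
      (Finset.sort_toFinset _ _).symm

def orderedSubsets (S : Finset ℕ) (m : ℕ) : Finset (Σ _ : Finset ℕ, List ℕ) :=
  (S.powersetCard m).sigma fun A => (A.sort (· ≤ ·)).permutations.toFinset

theorem mem_orderedSubsets {S A : Finset ℕ} {m : ℕ} {l : List ℕ} :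
    ⟨A, l⟩ ∈ orderedSubsets S m ↔
      l.Nodup ∧ (∀ y ∈ l, y ∈ S) ∧ l.length = m ∧ l.toFinset = A := by
  simp only [orderedSubsets, Finset.mem_sigma, Finset.mem_powersetCard, mem_permutations_sort_iff]
  constructor
  · rintro ⟨⟨hAS, hA⟩, hnd, rfl⟩
    exact ⟨hnd, fun y hy => hAS (List.mem_toFinset.2 hy),
      by rw [← List.toFinset_card_of_nodup hnd, hA], rfl⟩
  · rintro ⟨hnd, hsub, hlen, rfl⟩
    exact ⟨⟨fun y hy => hsub y (List.mem_toFinset.1 hy),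
      by rw [List.toFinset_card_of_nodup hnd, hlen]⟩, hnd, rfl⟩

theorem finsum_isBTree_bnk {M : Type*} [AddCommMonoid M] {S : Finset ℕ} {k : ℕ} (hk : 2 ≤ k)
    (hkS : k ≤ S.card) (g : RTree S → M) (w : Finset ℕ → List ℕ → M)
    (hgw : ∀ (l : List ℕ) (hne : l ≠ []) (hnd : l.Nodup) (hsub : ∀ x ∈ l, x ∈ S),
      l.length < S.card → g (broom S hne hnd hsub) = w l.toFinset l) :
    ∑ᶠ T ∈ {T | IsBTree S (bnk S k) T}, g T =
      ∑ A ∈ S.powersetCard (S.card - k + 1),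
        ∑ l ∈ (A.sort (· ≤ ·)).permutations.toFinset, w A l := by
  have hW : ∀ x ∈ orderedSubsets S (S.card - k + 1),
      x.2 ≠ [] ∧ x.2.Nodup ∧ (∀ y ∈ x.2, y ∈ S) ∧ x.2.length < S.card := fun x hx => by
    obtain ⟨hnd, hsub, hlen, -⟩ := mem_orderedSubsets.1 hx
    exact ⟨List.ne_nil_of_length_pos (by omega), hnd, hsub, by omega⟩
  rw [Finset.sum_sigma']
  change _ = ∑ x ∈ orderedSubsets S (S.card - k + 1), w x.1 x.2
  rw [← finsum_set_coe_eq_finsum_mem, ← Finset.sum_coe_sort, ← finsum_eq_sum_of_fintype]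
  let e : orderedSubsets S (S.card - k + 1) → {T | IsBTree S (bnk S k) T} := fun x =>
    ⟨broom S (hW x.1 x.2).1 (hW x.1 x.2).2.1 (hW x.1 x.2).2.2.1,
      (isBTree_broom_iff _ _ _ hk hkS (hW x.1 x.2).2.2.2).2 (mem_orderedSubsets.1 x.2).2.2.1⟩
  refine (finsum_eq_of_bijective e ⟨fun x y hxy => ?_, fun T => ?_⟩ fun x => ?_).symm
  · obtain ⟨hne, hnd, hsub, -⟩ := hW x.1 x.2
    obtain ⟨hne', hnd', hsub', -⟩ := hW y.1 y.2
    obtain ⟨⟨A, l⟩, hx⟩ := x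
    obtain ⟨⟨A', l'⟩, hy⟩ := y
    obtain ⟨-, -, hlen, rfl⟩ := mem_orderedSubsets.1 hx
    obtain ⟨-, -, hlen', rfl⟩ := mem_orderedSubsets.1 hy
    obtain rfl := eq_of_broom_eq hne hnd hsub hne' hnd' hsub' (hlen.trans hlen'.symm)
      (congrArg Subtype.val hxy)
    rfl
  · obtain ⟨l, hne, hnd, hsub, hlt, hT⟩ := exists_broom_eq_of_isBTree hk hkS T.2
    have hlen := (isBTree_broom_iff hne hnd hsub hk hkS hlt).1 (hT ▸ T.2)
    exact ⟨⟨⟨l.toFinset, l⟩, mem_orderedSubsets.2 ⟨hnd, hsub, hlen, rfl⟩⟩, Subtype.ext hT⟩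
  · obtain ⟨hne, hnd, hsub, hlt⟩ := hW x.1 x.2
    obtain ⟨-, -, -, hA⟩ := mem_orderedSubsets.1 x.2
    rw [← hA]
    exact (hgw _ hne hnd hsub hlt).symm

theorem Bnk_qh_polynomial_general
    (n k : ℕ) (hk2 : 2 ≤ k) (hkn : k ≤ n)
    (B : Finset (Finset ℕ))
    (hB : B = (Finset.Icc 1 n).image (fun i => ({i} : Finset ℕ)) ∪
        ((Finset.Icc 1 n).powerset.filter fun I => k ≤ I.card))
    (R : Type) [CommRing R] (t q : R) :
    (∑ᶠ T ∈ {T : RTree (Finset.Icc 1 n) | IsBTree (Finset.Icc 1 n) B T},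
        t ^ T.des * q ^ T.maj)
      = ∑ A ∈ (Finset.Icc 1 n).powersetCard (n - k + 1),
          ∑ l ∈ (A.sort (· ≤ ·)).permutations.toFinset,
            t ^ (wordDes l +
                  (((Finset.Icc 1 n) \ A).filter fun j => l.headD 0 < j).card) *
            q ^ (wordMaj l + wordDes l +
                  (((Finset.Icc 1 n) \ A).filter fun j => l.headD 0 < j).card) := by
  have hcard : (Finset.Icc 1 n).card = n := by simp
  subst hB
  rw [show n - k + 1 = (Finset.Icc 1 n).card - k + 1 by rw [hcard]]
  refine finsum_isBTree_bnk (M := R) hk2 (by rwa [hcard]) _ _ fun l hne hnd hsub hlt => ?_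
  rw [des_broom, maj_broom _ _ _ _ hlt]

/-- For `2 ≤ k ≤ n`, the `q`-`h`-polynomial of the nestohedron
of `B_n^k` is `∑_A ∑_{π ∈ S_A} t^{des π + c(A,π)} q^{maj π + des π + c(A,π)}`,
where `A` ranges over `(n−k+1)`-subsets of `[n]`, `π` over orderings of `A`,
and `c(A,π) = #{j ∈ [n] \ A : j > π₁}`.  (Stated for all commutative rings,
equivalently as an identity in `ℤ[t,q]`.) -/
theorem Bnk_qh_polynomial
    (n k : ℕ) (hn : 2 ≤ n) (hk2 : 2 ≤ k) (hkn : k ≤ n)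
    (B : Finset (Finset ℕ))
    (hB : B = (Finset.Icc 1 n).image (fun i => ({i} : Finset ℕ)) ∪
        ((Finset.Icc 1 n).powerset.filter fun I => k ≤ I.card))
    (R : Type) [CommRing R] (t q : R) :
    (∑ᶠ T ∈ {T : RTree (Finset.Icc 1 n) | IsBTree (Finset.Icc 1 n) B T},
        t ^ T.des * q ^ T.maj)
      = ∑ A ∈ (Finset.Icc 1 n).powersetCard (n - k + 1),
          ∑ l ∈ (A.sort (· ≤ ·)).permutations.toFinset,
            t ^ (wordDes l +
                  (((Finset.Icc 1 n) \ A).filter fun j => l.headD 0 < j).card) *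
            q ^ (wordMaj l + wordDes l +
                  (((Finset.Icc 1 n) \ A).filter fun j => l.headD 0 < j).card) :=
  Bnk_qh_polynomial_general n k hk2 hkn B hB R t q
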